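/- arXiv:0706.1062 — 2 statements merged into one kernel-verified Lean document; each statement's English description precedes it below -/
import Mathlib

section
/- If X_1, ..., X_n are i.i.d. continuous power-law random variables with parameter α > 1 and lower bound x_min, and α̂ = 1 + n/(Σ ln(X_i/x_min)), then (α̂ − 1)^{-1} · (α−1) · n, equivalently Σ ln(X_i/x_min), is distributed as a Gamma random variable with shape n and rate α − 1; consequently for n ≥ 2, E[α̂] = 1 + n(α−1)/(n−1) = (nα − 1)/(n − 1). -/
/-!
The change of variables `x = x_min e^y` turns the power-law density
`(α - 1) x_min^(α-1) x^(-α)` into `(α - 1) e^{-(α-1) y}`, so each `log (X_i / x_min)` is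
exponential with rate `α - 1`. Convolving a `Gamma(a, r)` density with an `Exp(r)` density gives
`r^(a+1) e^{-rx} / Γ(a) ∫₀ˣ y^(a-1) dy`, the `Gamma(a + 1, r)` density, so by independence the sum
of the `n` logarithms is `Gamma(n, α - 1)`. Finally `t⁻¹ γ_{a,r}(t) = r / (a - 1) · γ_{a-1,r}(t)`
gives `E[T⁻¹] = r / (a - 1)` for `T ~ Gamma(a, r)`, whence the mean of `α̂ = 1 + n / T`.
-/

open MeasureTheory ProbabilityTheory Set Real

lemma lintegral_Icc_zero_ofReal_rpow_sub_one {a x : ℝ} (ha : 0 < a) (hx : 0 ≤ x) :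
    ∫⁻ y in Icc 0 x, ENNReal.ofReal (y ^ (a - 1)) = ENNReal.ofReal (x ^ a / a) := by
  have hint : IntegrableOn (fun y : ℝ => y ^ (a - 1)) (Ioc 0 x) :=
    (intervalIntegrable_iff_integrableOn_Ioc_of_le hx).1
      (intervalIntegral.intervalIntegrable_rpow' (by linarith))
  rw [setLIntegral_congr Ioc_ae_eq_Icc.symm, ← ofReal_integral_eq_lintegral_ofReal hint
      ((ae_restrict_iff' measurableSet_Ioc).2 (ae_of_all _ fun y hy => rpow_nonneg hy.1.le _)),
    ← intervalIntegral.integral_of_le hx, integral_rpow (Or.inl (by linarith))]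
  simp [zero_rpow ha.ne']

lemma image_const_mul_exp_Ici_zero {t : ℝ} (ht : 0 < t) :
    (fun y => t * exp y) '' Ici 0 = Ici t := by
  rw [← image_image (t * ·) exp, image_exp_Ici, exp_zero, image_mul_left_Ici ht, mul_one]

namespace ProbabilityTheory

lemma measurable_gammaPDF (a r : ℝ) : Measurable (gammaPDF a r) :=
  (measurable_gammaPDFReal a r).ennreal_ofReal

lemma integrable_gammaPDFReal {a r : ℝ} (ha : 0 < a) (hr : 0 < r) :
    Integrable (gammaPDFReal a r) :=
  (integrable_toReal_of_lintegral_ne_top (measurable_gammaPDF a r).aemeasurable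
    (by simp [lintegral_gammaPDF_eq_one ha hr])).congr
    (ae_of_all _ fun x => ENNReal.toReal_ofReal (gammaPDFReal_nonneg ha hr x))

lemma integral_gammaPDFReal_eq_one {a r : ℝ} (ha : 0 < a) (hr : 0 < r) :
    ∫ x, gammaPDFReal a r x = 1 := by
  rw [integral_eq_lintegral_of_nonneg_ae (ae_of_all _ (gammaPDFReal_nonneg ha hr))
    (measurable_gammaPDFReal a r).aestronglyMeasurable]
  change (∫⁻ x, gammaPDF a r x).toReal = 1
  rw [lintegral_gammaPDF_eq_one ha hr, ENNReal.toReal_one]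

lemma gammaPDF_mul_gammaPDF_one_neg_add {a r x y : ℝ} (hΓ : 0 < Gamma a) (hr : 0 < r) :
    gammaPDF a r y * gammaPDF 1 r (-y + x) = (Icc 0 x).indicator (fun y =>
      ENNReal.ofReal (r ^ (a + 1) / Gamma a * exp (-(r * x))) *
        ENNReal.ofReal (y ^ (a - 1))) y := by
  by_cases hy : y ∈ Icc 0 x
  · obtain ⟨hy0, hyx⟩ := hy
    rw [indicator_of_mem (show y ∈ Icc 0 x from ⟨hy0, hyx⟩), gammaPDF_of_nonneg hy0,
      gammaPDF_of_nonneg (by linarith), ← ENNReal.ofReal_mul (by positivity),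
      ← ENNReal.ofReal_mul (by positivity)]
    congr 1
    rw [rpow_add_one hr.ne', show -(r * x) = -(r * y) + -(r * (-y + x)) by ring, exp_add]
    simp only [rpow_one, Gamma_one, sub_self, rpow_zero, div_one, mul_one]
    ring
  · rw [indicator_of_notMem hy]
    rcases not_and_or.1 hy with hy | hy
    · rw [gammaPDF_of_neg (not_le.1 hy), zero_mul]
    · rw [gammaPDF_of_neg (x := -y + x) (by linarith [not_le.1 hy]), mul_zero]

lemma lconvolution_gammaPDF_gammaPDF_one {a r : ℝ} (ha : 0 < a) (hr : 0 < r) (x : ℝ) :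
    (gammaPDF a r ⋆ₗ[volume] gammaPDF 1 r) x = gammaPDF (a + 1) r x := by
  have hΓ := Gamma_pos_of_pos ha
  rcases lt_or_ge x 0 with hx | hx
  · simp [lconvolution_def, gammaPDF_mul_gammaPDF_one_neg_add hΓ hr, Icc_eq_empty_of_lt hx,
      gammaPDF_of_neg hx]
  · simp_rw [lconvolution_def, gammaPDF_mul_gammaPDF_one_neg_add hΓ hr]
    rw [lintegral_indicator measurableSet_Icc, lintegral_const_mul _ (by fun_prop),
      lintegral_Icc_zero_ofReal_rpow_sub_one ha hx, ← ENNReal.ofReal_mul (by positivity),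
      gammaPDF_of_nonneg hx, Gamma_add_one ha.ne', add_sub_cancel_right]
    congr 1
    field_simp

lemma gammaMeasure_conv_expMeasure {a r : ℝ} (ha : 0 < a) (hr : 0 < r) :
    gammaMeasure a r ∗ expMeasure r = gammaMeasure (a + 1) r := by
  rw [expMeasure, gammaMeasure, gammaMeasure, gammaMeasure,
    conv_withDensity_eq_lconvolution (measurable_gammaPDF a r) (measurable_gammaPDF 1 r)]
  exact congrArg _ (funext (lconvolution_gammaPDF_gammaPDF_one ha hr))

lemma iIndepFun.hasLaw_sum_gammaMeasure {Ω ι : Type*} [MeasurableSpace Ω] {P : Measure Ω}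
    {Y : ι → Ω → ℝ} {r : ℝ} (hr : 0 < r) (hind : iIndepFun Y P)
    (hY : ∀ i, HasLaw (Y i) (expMeasure r) P) {s : Finset ι} (hs : s.Nonempty) :
    HasLaw (∑ i ∈ s, Y i) (gammaMeasure s.card r) P := by
  induction hs using Finset.Nonempty.cons_induction with
  | singleton i => simpa [expMeasure] using hY i
  | cons i s hi hs ih =>
    have hcard : (0 : ℝ) < s.card := by simpa using hs.card_pos
    have := isProbabilityMeasure_gammaMeasure hcard hr
    have := isProbabilityMeasure_expMeasure hr
    rw [Finset.sum_cons, add_comm, Finset.card_cons, Nat.cast_succ,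
      ← gammaMeasure_conv_expMeasure hcard hr]
    exact IndepFun.hasLaw_add ih (hY i)
      (hind.indepFun_finsetSum_of_notMem₀ (fun j => (hY j).aemeasurable) hi)

lemma paretoMeasure_sub_one_eq_withDensity {t α : ℝ} (ht : 0 < t) :
    paretoMeasure t (α - 1) = volume.withDensity (fun x => ENNReal.ofReal
      (indicator (Ici t) (fun x => ((α - 1) / t) * (x / t) ^ (-α)) x)) := by
  unfold paretoMeasure paretoPDF
  congr! 2 with x
  by_cases hx : t ≤ x
  · rw [paretoPDFReal, if_pos hx, indicator_of_mem (mem_Ici.2 hx), sub_add_cancel,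
      div_rpow (ht.le.trans hx) ht.le, rpow_neg ht.le, rpow_sub_one ht.ne']
    field_simp
  · rw [paretoPDFReal, if_neg hx, indicator_of_notMem (by simpa using hx)]

lemma ofReal_mul_paretoPDF_const_mul_exp {t r y : ℝ} (ht : 0 < t) (hy : 0 ≤ y) :
    ENNReal.ofReal (t * exp y) * paretoPDF t r (t * exp y) = gammaPDF 1 r y := by
  rw [paretoPDF_of_le (le_mul_of_one_le_right ht.le (one_le_exp hy)), gammaPDF_of_nonneg hy,
    ← ENNReal.ofReal_mul (by positivity)]
  congr 1
  rw [mul_rpow ht.le (exp_pos y).le, ← exp_mul, rpow_neg ht.le, rpow_add ht, rpow_one]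
  simp only [mul_inv_rev, neg_add_rev, rpow_one, Gamma_one, div_one, sub_self, rpow_zero, mul_one]
  field_simp
  rw [mul_right_comm, ← exp_add]
  ring_nf

lemma map_log_div_paretoMeasure {t r : ℝ} (ht : 0 < t) :
    (paretoMeasure t r).map (fun x => log (x / t)) = expMeasure r := by
  have hlog : Measurable fun x => log (x / t) := by fun_prop
  refine Measure.ext_of_lintegral _ fun φ hφ => ?_
  have hpareto : ∫⁻ x, φ (log (x / t)) ∂paretoMeasure t r
      = ∫⁻ x in Ici t, paretoPDF t r x * φ (log (x / t)) := by
    rw [paretoMeasure, lintegral_withDensity_eq_lintegral_mul _ (f := paretoPDF t r)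
      (measurable_paretoPDFReal t r).ennreal_ofReal (g := fun x => φ (log (x / t)))
      (hφ.comp hlog), setLIntegral_eq_of_support_subset]
    · rfl
    · exact Function.support_subset_iff'.2 fun x hx => by
        simp [paretoPDF_of_lt (not_le.1 hx)]
  have hexp : ∫⁻ y, φ y ∂expMeasure r = ∫⁻ y in Ici 0, gammaPDF 1 r y * φ y := by
    rw [expMeasure, gammaMeasure, lintegral_withDensity_eq_lintegral_mul _
      (measurable_gammaPDF 1 r) hφ, setLIntegral_eq_of_support_subset]
    · rfl
    · exact Function.support_subset_iff'.2 fun x hx => by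
        simp [gammaPDF_of_neg (not_le.1 hx)]
  rw [lintegral_map hφ hlog, hpareto, hexp, ← image_const_mul_exp_Ici_zero ht,
    lintegral_image_eq_lintegral_abs_deriv_mul measurableSet_Ici
      (fun y _ => ((hasDerivAt_exp y).const_mul t).hasDerivWithinAt)
      ((mul_right_injective₀ ht.ne').comp exp_injective).injOn]
  refine setLIntegral_congr_fun measurableSet_Ici fun y hy => ?_
  rw [abs_of_pos (by positivity), ← mul_assoc, ofReal_mul_paretoPDF_const_mul_exp ht hy,
    mul_div_cancel_left₀ _ ht.ne', log_exp]

lemma gammaPDFReal_mul_inv {a r x : ℝ} (ha : 1 < a) (hr : 0 < r) (hx : x ≠ 0) :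
    gammaPDFReal a r x * x⁻¹ = r / (a - 1) * gammaPDFReal (a - 1) r x := by
  rcases hx.lt_or_gt with hx | hx
  · simp [gammaPDFReal, not_le.2 hx]
  · have hΓ : Gamma a = (a - 1) * Gamma (a - 1) := by
      simpa using Gamma_add_one (s := a - 1) (by linarith)
    have := Gamma_pos_of_pos (show 0 < a - 1 by linarith)
    rw [gammaPDFReal, gammaPDFReal, if_pos hx.le, if_pos hx.le, hΓ,
      rpow_sub_one hx.ne' (a - 1), rpow_sub_one hr.ne' a]
    field_simp

lemma integrable_inv_gammaMeasure {a r : ℝ} (ha : 1 < a) (hr : 0 < r) :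
    Integrable (fun t => t⁻¹) (gammaMeasure a r) := by
  rw [gammaMeasure, integrable_withDensity_iff (measurable_gammaPDF a r)
    (ae_of_all _ fun _ => ENNReal.ofReal_lt_top)]
  refine ((integrable_gammaPDFReal (a := a - 1) (by linarith) hr).const_mul (r / (a - 1))).congr ?_
  filter_upwards [Measure.ae_ne volume 0] with x hx
  rw [gammaPDF, ENNReal.toReal_ofReal (gammaPDFReal_nonneg (zero_lt_one.trans ha) hr x),
    mul_comm x⁻¹, gammaPDFReal_mul_inv ha hr hx]

lemma integral_inv_gammaMeasure {a r : ℝ} (ha : 1 < a) (hr : 0 < r) :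
    ∫ t, t⁻¹ ∂gammaMeasure a r = r / (a - 1) := by
  rw [gammaMeasure, integral_withDensity_eq_integral_toReal_smul (measurable_gammaPDF a r)
    (ae_of_all _ fun _ => ENNReal.ofReal_lt_top)]
  calc ∫ x, (gammaPDF a r x).toReal • x⁻¹ = ∫ x, r / (a - 1) * gammaPDFReal (a - 1) r x := by
        refine integral_congr_ae ?_
        filter_upwards [Measure.ae_ne volume 0] with x hx
        rw [gammaPDF, ENNReal.toReal_ofReal (gammaPDFReal_nonneg (zero_lt_one.trans ha) hr x),
          smul_eq_mul, gammaPDFReal_mul_inv ha hr hx]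
    _ = r / (a - 1) := by
        rw [integral_const_mul, integral_gammaPDFReal_eq_one (a := a - 1) (by linarith) hr,
          mul_one]

end ProbabilityTheory

theorem powerlaw_mle_gamma_and_mean_general
    {Ω : Type*} [MeasurableSpace Ω] (Pr : Measure Ω)
    (n : ℕ) (hn : 1 ≤ n) (X : Fin n → Ω → ℝ) (hX : ∀ i, Measurable (X i))
    (xmin α : ℝ) (hx : 0 < xmin) (hα : 1 < α)
    (hindep : iIndepFun X Pr)
    (hlaw : ∀ i, Measure.map (X i) Pr = volume.withDensity (fun x =>
      ENNReal.ofReal (indicator (Ici xmin)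
        (fun x => ((α - 1) / xmin) * (x / xmin) ^ (-α)) x))) :
    Measure.map (fun ω => ∑ i, Real.log (X i ω / xmin)) Pr
        = gammaMeasure n (α - 1) ∧
    (2 ≤ n →
      (∫ ω, (1 + n / ∑ i, Real.log (X i ω / xmin)) ∂Pr)
        = (n * α - 1) / (n - 1)) := by
  have hr : 0 < α - 1 := sub_pos.2 hα
  have hmeas : Measurable fun x => log (x / xmin) := by fun_prop
  have hlog : HasLaw (fun x => log (x / xmin)) (expMeasure (α - 1))
      (paretoMeasure xmin (α - 1)) :=
    ⟨hmeas.aemeasurable, map_log_div_paretoMeasure hx⟩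
  have hpareto (i : Fin n) : HasLaw (X i) (paretoMeasure xmin (α - 1)) Pr :=
    ⟨(hX i).aemeasurable, by rw [hlaw i, paretoMeasure_sub_one_eq_withDensity hx]⟩
  have hsum : HasLaw (fun ω => ∑ i, log (X i ω / xmin)) (gammaMeasure n (α - 1)) Pr := by
    simpa [Finset.sum_fn] using (hindep.comp _ fun _ => hmeas).hasLaw_sum_gammaMeasure hr
      (fun i => hlog.comp (hpareto i)) (Finset.univ_nonempty_iff.2 ⟨⟨0, hn⟩⟩)
  refine ⟨hsum.map_eq, fun hn2 => ?_⟩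
  have hn1 : (1 : ℝ) < n := by exact_mod_cast hn2
  have := isProbabilityMeasure_gammaMeasure (zero_lt_one.trans hn1) hr
  calc ∫ ω, (1 + n / ∑ i, log (X i ω / xmin)) ∂Pr
      = ∫ t, (1 + n * t⁻¹) ∂gammaMeasure n (α - 1) := by
        simp_rw [div_eq_mul_inv]
        exact hsum.integral_comp (f := fun t => 1 + n * t⁻¹) (by fun_prop)
    _ = 1 + n * ((α - 1) / (n - 1)) := by
        rw [integral_add (integrable_const _) ((integrable_inv_gammaMeasure hn1 hr).const_mul _),
          integral_const_mul, integral_inv_gammaMeasure hn1 hr]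
        simp
    _ = (n * α - 1) / (n - 1) := by
        field_simp [(sub_pos.2 hn1).ne']
        ring

/-- If `X_1, ..., X_n` are i.i.d. continuous power-law with parameter `α > 1` and
lower bound `x_min`, then `Σ ln(X_i/x_min)` is Gamma-distributed with shape `n`
and rate `α - 1`; consequently, for `n ≥ 2`, the MLE
`α̂ = 1 + n/(Σ ln(X_i/x_min))` has expectation `(nα - 1)/(n - 1)`. -/
theorem powerlaw_mle_gamma_and_mean
    {Ω : Type*} [MeasurableSpace Ω] (Pr : Measure Ω) [IsProbabilityMeasure Pr]
    (n : ℕ) (hn : 1 ≤ n) (X : Fin n → Ω → ℝ) (hX : ∀ i, Measurable (X i))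
    (xmin α : ℝ) (hx : 0 < xmin) (hα : 1 < α)
    (hindep : iIndepFun X Pr)
    (hlaw : ∀ i, Measure.map (X i) Pr = volume.withDensity (fun x =>
      ENNReal.ofReal (indicator (Ici xmin)
        (fun x => ((α - 1) / xmin) * (x / xmin) ^ (-α)) x))) :
    Measure.map (fun ω => ∑ i, Real.log (X i ω / xmin)) Pr
        = gammaMeasure n (α - 1) ∧
    (2 ≤ n →
      (∫ ω, (1 + n / ∑ i, Real.log (X i ω / xmin)) ∂Pr)
        = (n * α - 1) / (n - 1)) :=
  powerlaw_mle_gamma_and_mean_general Pr n hn X hX xmin α hx hα hindep hlaw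
end

section
/- For n ≥ 3, the MLE α̂ = 1 + n/(Σ ln(X_i/x_min)) from i.i.d. continuous power-law data with parameter α has standard deviation n(α−1)/((n−1)√(n−2)). -/
/-!
Each `log (X i / xmin)` is exponentially distributed with rate `c = α - 1`: its moment generating
function is `c / (c - t)`. By independence `T = ∑ i, log (X i / xmin)` has the `Gamma(n, c)`
transform `(c / (c - t)) ^ n`, and `α̂ = 1 + n / T`, so only the negative moments of `T` are needed.
These are read off the Laplace transform through `k! / T ^ (k + 1) = ∫₀^∞ s ^ k e^{-s T} ds` and
Tonelli: `E[1 / T] = ∫₀^∞ (c / (c + s)) ^ n ds = c / (n - 1)` and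
`E[1 / T²] = ∫₀^∞ s (c / (c + s)) ^ n ds = c² / ((n - 1) (n - 2))`, whence
`Var α̂ = n² Var (1 / T) = n² c² / ((n - 1)² (n - 2))`.
-/

open MeasureTheory Set ProbabilityTheory
open Real
open scoped Nat

theorem lintegral_Ioi_pow_mul_exp_neg_mul (k : ℕ) {t : ℝ} (ht : 0 < t) :
    ∫⁻ s in Ioi 0, ENNReal.ofReal (s ^ k * rexp (-s * t)) = ENNReal.ofReal (k ! / t ^ (k + 1)) := by
  have h : ∫ s in Ioi 0, s ^ k * rexp (-s * t) = k ! / t ^ (k + 1) := calc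
    _ = ∫ s in Ioi 0, s ^ ((k + 1 : ℝ) - 1) * rexp (-(t * s)) := by
        congr with s
        rw [add_sub_cancel_right, rpow_natCast, neg_mul, mul_comm t s]
    _ = (1 / t) ^ ((k : ℝ) + 1) * Gamma (k + 1) :=
        integral_rpow_mul_exp_neg_mul_Ioi (by positivity) ht
    _ = k ! / t ^ (k + 1) := by
        rw [Gamma_nat_eq_factorial, ← Nat.cast_succ, rpow_natCast, one_div, inv_pow, inv_mul_eq_div]
  rw [← h, ofReal_integral_eq_lintegral_ofReal]
  · exact .of_integral_ne_zero (by rw [h]; positivity)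
  · filter_upwards [ae_restrict_mem measurableSet_Ioi] with s (hs : 0 < s)
    positivity

theorem integral_Ioi_add_rpow_of_lt {a c : ℝ} (ha : a < -1) (hc : 0 < c) :
    ∫ s in Ioi 0, (s + c) ^ a = -c ^ (a + 1) / (a + 1) := by
  have h := (measurePreserving_add_right volume c).setIntegral_preimage_emb
    (measurableEmbedding_addRight c) (fun x => x ^ a) (Ioi c)
  rw [preimage_add_const_Ioi, sub_self] at h
  rw [h, integral_Ioi_rpow_of_lt ha hc]

theorem div_add_rpow_eq_mul_add_rpow_neg {c s p : ℝ} (hc : 0 ≤ c) (hs : 0 ≤ s) :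
    (c / (c + s)) ^ p = c ^ p * (s + c) ^ (-p) := by
  rw [div_rpow hc (by positivity), rpow_neg (by positivity), add_comm, div_eq_mul_inv]

theorem integral_Ioi_div_add_rpow {c p : ℝ} (hc : 0 < c) (hp : 1 < p) :
    ∫ s in Ioi 0, (c / (c + s)) ^ p = c / (p - 1) := by
  rw [setIntegral_congr_fun measurableSet_Ioi fun s (hs : 0 < s) =>
      div_add_rpow_eq_mul_add_rpow_neg hc.le hs.le,
    integral_const_mul, integral_Ioi_add_rpow_of_lt (by linarith) hc, mul_div_assoc', mul_neg,
    ← rpow_add hc, add_neg_cancel_left, rpow_one, ← neg_div_neg_eq, neg_neg, neg_add, neg_neg,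
    ← sub_eq_add_neg]

theorem integral_Ioi_mul_div_add_rpow {c p : ℝ} (hc : 0 < c) (hp : 2 < p) :
    ∫ s in Ioi 0, s * (c / (c + s)) ^ p = c ^ 2 / ((p - 1) * (p - 2)) := by
  have hsplit : ∀ s ∈ Ioi (0 : ℝ), s * (c / (c + s)) ^ p
      = c ^ p * ((s + c) ^ (-p + 1) - c * (s + c) ^ (-p)) := by
    intro s (hs : 0 < s)
    rw [div_add_rpow_eq_mul_add_rpow_neg hc.le hs.le, rpow_add_one (by positivity)]
    ring
  have hcp : c ^ p * c ^ (-p + 1) = c := by rw [← rpow_add hc, add_neg_cancel_left, rpow_one]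
  rw [setIntegral_congr_fun measurableSet_Ioi hsplit, integral_const_mul, integral_sub,
    integral_const_mul, integral_Ioi_add_rpow_of_lt (by linarith) hc,
    integral_Ioi_add_rpow_of_lt (by linarith) hc, rpow_add_one hc.ne']
  · have : -p + 1 ≠ 0 := by linarith
    have : -p + 1 + 1 ≠ 0 := by linarith
    have : p - 1 ≠ 0 := by linarith
    have : p - 2 ≠ 0 := by linarith
    field_simp
    linear_combination (p - 1) * (p - 2) * hcp
  · exact integrableOn_add_rpow_Ioi_of_lt (by linarith) (by linarith)
  · exact (integrableOn_add_rpow_Ioi_of_lt (by linarith) (by linarith)).const_mul c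

section NegativeMoments

variable {Ω : Type*} [MeasurableSpace Ω] {μ : Measure Ω} {T : Ω → ℝ}

theorem integral_factorial_div_pow_eq_integral_mgf [IsFiniteMeasure μ] (hT : Measurable T)
    (hpos : ∀ᵐ ω ∂μ, 0 < T ω) (k : ℕ) :
    ∫ ω, k ! / T ω ^ (k + 1) ∂μ = ∫ s in Ioi 0, s ^ k * mgf T μ (-s) := by
  have hlint : ∫⁻ ω, ENNReal.ofReal (k ! / T ω ^ (k + 1)) ∂μ
      = ∫⁻ s in Ioi 0, ENNReal.ofReal (s ^ k * mgf T μ (-s)) := calc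
    _ = ∫⁻ ω, (∫⁻ s in Ioi (0 : ℝ), ENNReal.ofReal (s ^ k * rexp (-s * T ω))) ∂μ :=
        lintegral_congr_ae <| hpos.mono fun ω h => (lintegral_Ioi_pow_mul_exp_neg_mul k h).symm
    _ = ∫⁻ s in Ioi (0 : ℝ), ∫⁻ ω, ENNReal.ofReal (s ^ k * rexp (-s * T ω)) ∂μ :=
        lintegral_lintegral_swap (Measurable.aemeasurable (by fun_prop))
    _ = _ := by
        refine setLIntegral_congr_fun measurableSet_Ioi fun s (hs : 0 < s) => ?_
        have hexp : Integrable (fun ω => rexp (-s * T ω)) μ := by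
          refine .of_mem_Icc 0 1 (by fun_prop) (hpos.mono fun ω h => ⟨(exp_pos _).le, ?_⟩)
          exact exp_le_one_iff.2 (by nlinarith)
        rw [mgf, ← integral_const_mul, ofReal_integral_eq_lintegral_ofReal (hexp.const_mul _)
          (ae_of_all _ fun ω => by positivity)]
  have hmgf : Measurable (mgf T μ) :=
    (StronglyMeasurable.integral_prod_right (f := fun t ω => rexp (t * T ω))
      (Measurable.stronglyMeasurable (by fun_prop))).measurable
  rw [integral_eq_lintegral_of_nonneg_ae (hpos.mono fun ω h => by positivity)
    (Measurable.aestronglyMeasurable (by fun_prop)), hlint, ← integral_eq_lintegral_of_nonneg_ae]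
  · filter_upwards [ae_restrict_mem measurableSet_Ioi] with s (hs : 0 < s)
    exact mul_nonneg (by positivity) mgf_nonneg
  · exact Measurable.aestronglyMeasurable (by fun_prop)

variable {c : ℝ} {n : ℕ}

theorem integral_inv_of_gamma_mgf [IsFiniteMeasure μ] (hT : Measurable T)
    (hpos : ∀ᵐ ω ∂μ, 0 < T ω) (hc : 0 < c) (hmgf : ∀ t < 0, mgf T μ t = (c / (c - t)) ^ n)
    (hn : 1 < n) : ∫ ω, (T ω)⁻¹ ∂μ = c / (n - 1) := by
  have h := integral_factorial_div_pow_eq_integral_mgf hT hpos 0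
  simp only [Nat.factorial_zero, Nat.cast_one, zero_add, pow_one, one_div, pow_zero, one_mul] at h
  rw [h, setIntegral_congr_fun measurableSet_Ioi fun s (hs : 0 < s) => by
    rw [hmgf _ (neg_neg_of_pos hs), sub_neg_eq_add, ← rpow_natCast]]
  exact integral_Ioi_div_add_rpow hc (by exact_mod_cast hn)

theorem integral_inv_sq_of_gamma_mgf [IsFiniteMeasure μ] (hT : Measurable T)
    (hpos : ∀ᵐ ω ∂μ, 0 < T ω) (hc : 0 < c) (hmgf : ∀ t < 0, mgf T μ t = (c / (c - t)) ^ n)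
    (hn : 2 < n) : ∫ ω, (T ω)⁻¹ ^ 2 ∂μ = c ^ 2 / ((n - 1) * (n - 2)) := by
  have h := integral_factorial_div_pow_eq_integral_mgf hT hpos 1
  simp only [Nat.factorial_one, Nat.cast_one, one_div, pow_one, ← inv_pow] at h
  rw [h, setIntegral_congr_fun measurableSet_Ioi fun s (hs : 0 < s) => by
    rw [hmgf _ (neg_neg_of_pos hs), sub_neg_eq_add, ← rpow_natCast]]
  exact integral_Ioi_mul_div_add_rpow hc (by exact_mod_cast hn)

theorem variance_inv_of_gamma_mgf [IsProbabilityMeasure μ] (hT : Measurable T)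
    (hpos : ∀ᵐ ω ∂μ, 0 < T ω) (hc : 0 < c) (hmgf : ∀ t < 0, mgf T μ t = (c / (c - t)) ^ n)
    (hn : 2 < n) : Var[fun ω => (T ω)⁻¹; μ] = c ^ 2 / ((n - 1) ^ 2 * (n - 2)) := by
  have hn1 : (n : ℝ) - 1 ≠ 0 := by linarith [show (2 : ℝ) < n by exact_mod_cast hn]
  have hn2 : (n : ℝ) - 2 ≠ 0 := by linarith [show (2 : ℝ) < n by exact_mod_cast hn]
  have h1 := integral_inv_of_gamma_mgf hT hpos hc hmgf (by omega)
  have h2 := integral_inv_sq_of_gamma_mgf hT hpos hc hmgf hn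
  have hL2 : MemLp (fun ω => (T ω)⁻¹) 2 μ := by
    refine (memLp_two_iff_integrable_sq (by fun_prop)).2 (.of_integral_ne_zero ?_)
    rw [h2]
    exact div_ne_zero (by positivity) (mul_ne_zero hn1 hn2)
  rw [variance_eq_sub hL2]
  simp only [Pi.pow_apply]
  rw [h1, h2]
  field_simp
  ring

end NegativeMoments

noncomputable def powerLawPDF (xmin α x : ℝ) : ℝ :=
  indicator (Ici xmin) (fun x => ((α - 1) / xmin) * (x / xmin) ^ (-α)) x

section PowerLaw

variable {Ω : Type*} [MeasurableSpace Ω] {P : Measure Ω} {xmin α : ℝ}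

theorem measurable_powerLawPDF (xmin α : ℝ) : Measurable (powerLawPDF xmin α) :=
  Measurable.indicator (by fun_prop) measurableSet_Ici

theorem powerLawPDF_nonneg (hx : 0 ≤ xmin) (hα : 1 ≤ α) (x : ℝ) : 0 ≤ powerLawPDF xmin α x :=
  indicator_nonneg (fun y (hy : xmin ≤ y) =>
    mul_nonneg (div_nonneg (by linarith) hx) (rpow_nonneg (div_nonneg (by linarith) hx) _)) x

theorem ae_lt_of_map_eq_powerLaw {X : Ω → ℝ} (hX : Measurable X)
    (hlaw : P.map X = volume.withDensity fun x => ENNReal.ofReal (powerLawPDF xmin α x)) :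
    ∀ᵐ ω ∂P, xmin < X ω := by
  refine ae_of_ae_map hX.aemeasurable ?_
  rw [hlaw, ae_withDensity_iff (measurable_powerLawPDF xmin α).ennreal_ofReal]
  filter_upwards [measure_eq_zero_iff_ae_notMem.1 (measure_singleton xmin)] with x hne hpdf
  by_contra hle
  have hx : x ∉ Ici xmin := fun h => hne (le_antisymm (not_lt.1 hle) h)
  simp [powerLawPDF, indicator_of_notMem hx] at hpdf

theorem mgf_log_div_of_map_eq_powerLaw {X : Ω → ℝ} (hX : Measurable X)
    (hlaw : P.map X = volume.withDensity fun x => ENNReal.ofReal (powerLawPDF xmin α x))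
    (hx : 0 < xmin) (hα : 1 ≤ α) {t : ℝ} (ht : t < α - 1) :
    mgf (fun ω => log (X ω / xmin)) P t = (α - 1) / (α - 1 - t) := by
  have hpoint : ∀ x ∈ Ioi xmin, (α - 1) / xmin * (x / xmin) ^ (-α) * rexp (t * log (x / xmin))
      = (α - 1) / xmin / xmin ^ (t - α) * x ^ (t - α) := by
    intro x (hxx : xmin < x)
    have hu : 0 < x / xmin := div_pos (hx.trans hxx) hx
    rw [mul_comm t, ← rpow_def_of_pos hu, mul_assoc, ← rpow_add hu, neg_add_eq_sub,
      div_rpow (hx.trans hxx).le hx.le]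
    ring
  calc mgf (fun ω => log (X ω / xmin)) P t
      = ∫ x, rexp (t * log (x / xmin)) ∂(P.map X) :=
        (integral_map (f := fun x => rexp (t * log (x / xmin))) hX.aemeasurable
          (Measurable.aestronglyMeasurable (by fun_prop))).symm
    _ = ∫ x, (Ici xmin).indicator
          (fun x => (α - 1) / xmin * (x / xmin) ^ (-α) * rexp (t * log (x / xmin))) x := by
        rw [hlaw, integral_withDensity_eq_integral_toReal_smul
          (measurable_powerLawPDF xmin α).ennreal_ofReal (ae_of_all _ fun _ => ENNReal.ofReal_lt_top)]
        congr with x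
        rw [ENNReal.toReal_ofReal (powerLawPDF_nonneg hx.le hα x), smul_eq_mul, powerLawPDF]
        exact (indicator_mul_left _ _ fun x => rexp (t * log (x / xmin))).symm
    _ = ∫ x in Ioi xmin, (α - 1) / xmin / xmin ^ (t - α) * x ^ (t - α) := by
        rw [integral_indicator measurableSet_Ici, integral_Ici_eq_integral_Ioi]
        exact setIntegral_congr_fun measurableSet_Ioi hpoint
    _ = (α - 1) / (α - 1 - t) := by
        rw [integral_const_mul, integral_Ioi_rpow_of_lt (by linarith) hx, rpow_add_one hx.ne']
        have : 0 < xmin ^ (t - α) := rpow_pos_of_pos hx _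
        have : t - α + 1 ≠ 0 := by linarith
        have : α - 1 - t ≠ 0 := by linarith
        field_simp
        ring

theorem mgf_sum_log_div_of_map_eq_powerLaw {ι : Type*} [Fintype ι] {X : ι → Ω → ℝ}
    (hX : ∀ i, Measurable (X i)) (hindep : iIndepFun X P)
    (hlaw : ∀ i, P.map (X i) = volume.withDensity fun x => ENNReal.ofReal (powerLawPDF xmin α x))
    (hx : 0 < xmin) (hα : 1 ≤ α) {t : ℝ} (ht : t < α - 1) :
    mgf (fun ω => ∑ i, log (X i ω / xmin)) P t = ((α - 1) / (α - 1 - t)) ^ Fintype.card ι := by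
  have hlog := hindep.comp (fun _ x => log (x / xmin)) fun _ => by fun_prop
  simp only [Function.comp_def] at hlog
  rw [← Finset.sum_fn, hlog.mgf_sum (fun i => by fun_prop), Finset.prod_congr rfl fun i _ =>
    mgf_log_div_of_map_eq_powerLaw (hX i) (hlaw i) hx hα ht, Finset.prod_const, Finset.card_univ]

end PowerLaw

/-- For `n ≥ 3`, the MLE `α̂ = 1 + n/(Σ ln(X_i/x_min))` from i.i.d. continuous
power-law data with parameter `α` has standard deviation
`n(α-1)/((n-1)√(n-2))`. -/
theorem powerlaw_mle_stddev
    {Ω : Type*} [MeasurableSpace Ω] (Pr : Measure Ω) [IsProbabilityMeasure Pr]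
    (n : ℕ) (hn : 3 ≤ n) (X : Fin n → Ω → ℝ) (hX : ∀ i, Measurable (X i))
    (xmin α : ℝ) (hx : 0 < xmin) (hα : 1 < α)
    (hindep : iIndepFun X Pr)
    (hlaw : ∀ i, Measure.map (X i) Pr = volume.withDensity (fun x =>
      ENNReal.ofReal (indicator (Ici xmin)
        (fun x => ((α - 1) / xmin) * (x / xmin) ^ (-α)) x))) :
    Real.sqrt (variance (fun ω => 1 + n / ∑ i, Real.log (X i ω / xmin)) Pr)
      = n * (α - 1) / ((n - 1) * Real.sqrt (n - 2)) := by
  set T := fun ω => ∑ i, log (X i ω / xmin)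
  have hTm : Measurable T := by fun_prop
  have hpos : ∀ᵐ ω ∂Pr, 0 < T ω := by
    filter_upwards [ae_all_iff.2 fun i => ae_lt_of_map_eq_powerLaw (hX i) (hlaw i)] with ω hω
    exact Finset.sum_pos (fun i _ => log_pos ((one_lt_div hx).2 (hω i)))
      ⟨⟨0, by omega⟩, Finset.mem_univ _⟩
  have hvar := variance_inv_of_gamma_mgf (c := α - 1) hTm hpos (by linarith) (fun t ht => by
    simpa using mgf_sum_log_div_of_map_eq_powerLaw hX hindep hlaw hx hα.le (by linarith)) hn
  have hn2 : (0 : ℝ) < n - 2 := by linarith [show (3 : ℝ) ≤ n by exact_mod_cast hn]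
  simp_rw [div_eq_mul_inv (n : ℝ)]
  change √Var[fun ω => 1 + n * (T ω)⁻¹; Pr] = _
  rw [variance_const_add (Measurable.aestronglyMeasurable (by fun_prop)), variance_const_mul, hvar,
    show (n : ℝ) ^ 2 * ((α - 1) ^ 2 / ((n - 1) ^ 2 * (n - 2)))
      = (n * (α - 1) / ((n - 1) * √(n - 2))) ^ 2 by rw [div_pow, mul_pow, mul_pow, sq_sqrt hn2.le, mul_div_assoc]]
  exact sqrt_sq (div_nonneg (by nlinarith) (mul_nonneg (by linarith) (sqrt_nonneg _)))
end
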